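/- arXiv:2405.01424 — 6 statements merged into one kernel-verified Lean document; each statement's English description precedes it below -/
import Mathlib

section
/- For every vector a = (a_1, …, a_n) ∈ ℝ^n with a_j > 0 for all j = 1, …, n, there exists a unique C ∈ ℝ^n such that F(C) = a. -/
open MeasureTheory Set
open scoped Classical

/-- `f_j^{(C)}(t) = C_j - (t - x_j)^2`. -/
noncomputable def fj (n : ℕ) (x C : Fin n → ℝ) (j : Fin n) (t : ℝ) : ℝ :=
  C j - (t - x j) ^ 2

/-- `f^{(C)}(t) = max{f_1^{(C)}(t), …, f_n^{(C)}(t), 0}`. -/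
noncomputable def fmax (n : ℕ) (x C : Fin n → ℝ) (t : ℝ) : ℝ :=
  max (⨆ j : Fin n, fj n x C j t) 0

/-- `E_j^{(C)} = {t : f_j^{(C)}(t) = f^{(C)}(t)}`. -/
def Ej (n : ℕ) (x C : Fin n → ℝ) (j : Fin n) : Set ℝ :=
  {t | fj n x C j t = fmax n x C t}

/-- `F_j(C) = ∫_{E_j^{(C)}} f^{(C)}` if `E_j^{(C)} ≠ ∅`, else `0`. -/
noncomputable def Fj (n : ℕ) (x C : Fin n → ℝ) (j : Fin n) : ℝ :=
  if (Ej n x C j).Nonempty then ∫ t in Ej n x C j, fmax n x C t else 0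

/-- `F(C) = (F_1(C), …, F_n(C))`. -/
noncomputable def Fvec (n : ℕ) (x C : Fin n → ℝ) : Fin n → ℝ :=
  fun j => Fj n x C j

/-- `𝔾 = {C : F_j(C) > 0 for all j}`. -/
def Gset (n : ℕ) (x : Fin n → ℝ) : Set (Fin n → ℝ) :=
  {C | ∀ j, 0 < Fj n x C j}

/-- `γ_{ij}(C) = (C_i - C_j)/(2(x_j - x_i)) + (x_i + x_j)/2`. -/
noncomputable def gam (n : ℕ) (x C : Fin n → ℝ) (i j : Fin n) : ℝ :=
  (C i - C j) / (2 * (x j - x i)) + (x i + x j) / 2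

/-!
`F` is the gradient of the energy `Φ(C) = ½ ∫ (f^{(C)})²`: raising `C_j` only lifts the
parabola `f_j`, so `∂Φ/∂C_j = ∫_{E_j} f = F_j(C)`; the cells `E_j` overlap only in null sets
because two parabolas with distinct vertices meet at most once. Since `a > 0` and
`Φ(C) ≥ (C_j - 1)₊² / 2`, the function `Φ(C) - ⟨a, C⟩` grows at least linearly in `‖C‖`,
so it has a global minimiser, at which its partial derivatives `F_j(C) - a_j` vanish.

For uniqueness, let `F(C') = F(C)` and suppose `M = max_j (C'_j - C_j) > 0`, attained on `S`.
On `A = ⋃_{j ∈ S} E_j^{(C)}` we have `f^{(C')} = f^{(C)} + M`, and `A` lies in the union of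
the `C'`-cells indexed by `S`, so `∑_{j ∈ S} F_j(C') ≥ ∑_{j ∈ S} F_j(C) + M |A|`. As
`F_j(C) > 0`, `|A| > 0`, a contradiction; by symmetry `C' = C`.
-/

open Filter Topology Function

lemma max_iSup_zero_eq_zero_or_exists {ι : Type*} [Finite ι] (g : ι → ℝ) :
    max (⨆ i, g i) 0 = 0 ∨ ∃ i, g i = max (⨆ i, g i) 0 := by
  rcases isEmpty_or_nonempty ι with hι | hι
  · exact Or.inl (by rw [Real.iSup_of_isEmpty, max_self])
  · obtain ⟨i, hi⟩ := exists_eq_ciSup_of_finite (f := g)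
    rcases le_total (g i) 0 with h | h
    · exact Or.inl (hi ▸ max_eq_right h)
    · exact Or.inr ⟨i, by rw [← hi, max_eq_left h]⟩

lemma hasDerivAt_max_sub_sq_div_two {q R s₀ : ℝ} (h : s₀ - q ≠ R) :
    HasDerivAt (fun s => max (s - q) R ^ 2 / 2) (if R < s₀ - q then s₀ - q else 0) s₀ := by
  have hcont : Tendsto (fun s => s - q) (𝓝 s₀) (𝓝 (s₀ - q)) := tendsto_id.sub_const q
  rcases h.lt_or_gt with hlt | hgt
  · rw [if_neg hlt.not_gt]
    refine (hasDerivAt_const s₀ (R ^ 2 / 2)).congr_of_eventuallyEq ?_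
    filter_upwards [hcont.eventually (gt_mem_nhds hlt)] with s hs
    rw [max_eq_right hs.le]
  · rw [if_pos hgt]
    have hd : HasDerivAt (fun s => (s - q) ^ 2 / 2) (s₀ - q) s₀ :=
      ((((hasDerivAt_id' s₀).sub_const q).fun_pow 2).div_const 2).congr_deriv (by norm_num)
    refine hd.congr_of_eventuallyEq ?_
    filter_upwards [hcont.eventually (lt_mem_nhds hgt)] with s hs
    rw [max_eq_left hs.le]

lemma abs_sq_div_two_sub_sq_div_two_le {u v B : ℝ} (hu : 0 ≤ u) (hv : 0 ≤ v) (huB : u ≤ B)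
    (hvB : v ≤ B) : |u ^ 2 / 2 - v ^ 2 / 2| ≤ B * |u - v| := by
  rw [show u ^ 2 / 2 - v ^ 2 / 2 = (u + v) / 2 * (u - v) by ring, abs_mul,
    abs_of_nonneg (by positivity)]
  exact mul_le_mul_of_nonneg_right (by linarith) (abs_nonneg _)

lemma mul_add_mul_abs_le {a c e N : ℝ} (ha : 0 ≤ a) (hN : 0 < N)
    (he : max (c - 1) 0 ^ 2 / 2 ≤ e) : a * c + a * |c| ≤ e / N + 2 * N * a ^ 2 + 2 * a := by
  set m := max (c - 1) 0
  have hcm : c + |c| ≤ 2 * (m + 1) := by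
    have := le_max_left (c - 1) 0
    have := le_max_right (c - 1) 0
    rcases abs_cases c with ⟨h, _⟩ | ⟨h, _⟩ <;> linarith
  have hm : 2 * a * m ≤ e / N + 2 * N * a ^ 2 := by
    rw [div_add' _ _ _ hN.ne', le_div_iff₀ hN]
    nlinarith [sq_nonneg (m - 2 * N * a)]
  nlinarith [mul_le_mul_of_nonneg_left hcm ha]

lemma hasDerivAt_sum_mul_update {ι : Type*} [Fintype ι] [DecidableEq ι] (a C : ι → ℝ)
    (j : ι) :
    HasDerivAt (fun s => ∑ i, a i * update C j s i) (a j) (C j) := by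
  simpa [Pi.single_apply] using HasDerivAt.fun_sum (u := Finset.univ) fun i _ =>
    (hasDerivAt_pi.1 (hasDerivAt_update C j (C j)) i).const_mul (a i)

section Envelope

variable {n : ℕ} {x C C' : Fin n → ℝ} {t : ℝ} {j : Fin n}

lemma fmax_nonneg : 0 ≤ fmax n x C t := le_max_right _ _

lemma fj_le_fmax : fj n x C j t ≤ fmax n x C t :=
  (le_ciSup (f := fun i => fj n x C i t) (Set.finite_range _).bddAbove j).trans (le_max_left _ _)

lemma fmax_le {b : ℝ} (h : ∀ i, fj n x C i t ≤ b) (hb : 0 ≤ b) : fmax n x C t ≤ b :=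
  max_le (Real.iSup_le h hb) hb

lemma fmax_eq_zero_or_exists (C : Fin n → ℝ) (t : ℝ) :
    fmax n x C t = 0 ∨ ∃ j, fj n x C j t = fmax n x C t :=
  max_iSup_zero_eq_zero_or_exists _

lemma fmax_le_fmax_add {M : ℝ} (hM : 0 ≤ M) (h : ∀ i, C' i ≤ C i + M) :
    fmax n x C' t ≤ fmax n x C t + M := by
  refine fmax_le (fun i => ?_) (add_nonneg fmax_nonneg hM)
  have := fj_le_fmax (x := x) (C := C) (j := i) (t := t)
  unfold fj at *
  linarith [h i]

lemma fmax_mono (h : C' ≤ C) : fmax n x C' t ≤ fmax n x C t := by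
  simpa using fmax_le_fmax_add (x := x) (t := t) le_rfl (fun i => by simpa using h i)

lemma continuous_fmax_uncurry : Continuous fun p : (Fin n → ℝ) × ℝ => fmax n x p.1 p.2 := by
  rcases isEmpty_or_nonempty (Fin n) with hn | hn
  · simp only [fmax, Real.iSup_of_isEmpty]
    exact continuous_const
  · simp only [fmax, ← Finset.sup'_univ_eq_ciSup]
    refine (Continuous.finset_sup'_apply _ fun i _ => ?_).max continuous_const
    unfold fj
    fun_prop

lemma continuous_fmax : Continuous (fmax n x C) :=
  continuous_fmax_uncurry.comp (Continuous.prodMk_right C)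

lemma continuous_fmax_apply : Continuous fun C => fmax n x C t :=
  continuous_fmax_uncurry.comp (Continuous.prodMk_left t)

lemma Ej_subset_closedBall : Ej n x C j ⊆ Metric.closedBall (x j) √(C j) := by
  intro t (ht : fj n x C j t = fmax n x C t)
  have h := ht ▸ fmax_nonneg (x := x) (C := C) (t := t)
  unfold fj at h
  exact Real.abs_le_sqrt (by linarith)

lemma hasCompactSupport_fmax : HasCompactSupport (fmax n x C) := by
  refine HasCompactSupport.intro (isCompact_iUnion fun j => isCompact_closedBall (x j) √(C j))
    fun t ht => ?_
  refine (fmax_eq_zero_or_exists C t).resolve_right fun ⟨j, hj⟩ => ht ?_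
  exact mem_iUnion.2 ⟨j, Ej_subset_closedBall hj⟩

lemma integrable_fmax : Integrable (fmax n x C) :=
  continuous_fmax.integrable_of_hasCompactSupport hasCompactSupport_fmax

lemma integrable_fmax_sq : Integrable fun t => fmax n x C t ^ 2 / 2 := by
  have hsupp : HasCompactSupport fun t => fmax n x C t ^ 2 / 2 :=
    hasCompactSupport_fmax.comp_left (g := fun u : ℝ => u ^ 2 / 2) (by norm_num)
  exact ((continuous_fmax.pow 2).div_const 2).integrable_of_hasCompactSupport hsupp

lemma measurableSet_Ej : MeasurableSet (Ej n x C j) :=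
  (isClosed_eq (by unfold fj; fun_prop) continuous_fmax).measurableSet

lemma Fj_eq_setIntegral : Fj n x C j = ∫ t in Ej n x C j, fmax n x C t := by
  unfold Fj
  split_ifs with h
  · rfl
  · simp [Set.not_nonempty_iff_eq_empty.mp h]

lemma ae_fj_ne_fj {i k : Fin n} (hik : x i ≠ x k) : ∀ᵐ t, fj n x C i t ≠ fj n x C k t := by
  rw [ae_iff]
  refine Set.Subsingleton.measure_zero (fun t ht t' ht' => ?_) _
  simp only [ne_eq, not_not, mem_ofPred_eq, fj] at ht ht'
  have h : (t - t') * (2 * (x i - x k)) = 0 := by linear_combination ht - ht'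
  rcases mul_eq_zero.1 h with h | h
  · linarith
  · exact absurd (by linarith) hik

lemma ae_fj_ne_zero : ∀ᵐ t, fj n x C j t ≠ 0 := by
  rw [ae_iff]
  refine measure_mono_null (fun t ht => ?_)
    ((Set.toFinite {x j - √(C j), x j + √(C j)}).measure_zero _)
  replace ht : C j = (t - x j) ^ 2 := sub_eq_zero.1 (not_not.1 ht)
  have hsq : (t - x j) ^ 2 = √(C j) ^ 2 := by
    rw [Real.sq_sqrt (ht ▸ sq_nonneg _), ht]
  rcases sq_eq_sq_iff_eq_or_eq_neg.1 hsq with h | h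
  · exact Or.inr (mem_singleton_iff.2 (by linarith))
  · exact Or.inl (by linarith)

lemma sum_Fj_eq_setIntegral (hx : Injective x) (C : Fin n → ℝ) (S : Finset (Fin n)) :
    ∑ j ∈ S, Fj n x C j = ∫ t in ⋃ j ∈ S, Ej n x C j, fmax n x C t := by
  have hdisj : Pairwise (AEDisjoint volume on fun j : (S : Set (Fin n)) => Ej n x C j) :=
    fun i k hik => measure_mono_null (fun t ht => not_not.2 (ht.1.trans ht.2.symm))
      (ae_iff.1 (ae_fj_ne_fj (C := C) (hx.ne (Subtype.coe_ne_coe.2 hik))))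
  rw [← Finset.set_biUnion_coe, biUnion_eq_iUnion, integral_iUnion_ae
    (fun j => measurableSet_Ej.nullMeasurableSet) hdisj integrable_fmax.integrableOn]
  simp [Fj_eq_setIntegral, Finset.sum_attach S (fun j => ∫ t in Ej n x C j, fmax n x C t)]

end Envelope

section Uniqueness

variable {n : ℕ} {x C C' : Fin n → ℝ} {t : ℝ} {j : Fin n}

lemma fmax_eq_add_of_mem_Ej {M : ℝ} (hM : 0 ≤ M) (hle : ∀ i, C' i ≤ C i + M)
    (hj : C' j = C j + M) (ht : t ∈ Ej n x C j) : fmax n x C' t = fmax n x C t + M := by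
  refine le_antisymm (fmax_le_fmax_add hM hle) ?_
  calc fmax n x C t + M = fj n x C' j t := by
        rw [← show fj n x C j t = fmax n x C t from ht]
        unfold fj
        rw [hj]
        ring
    _ ≤ fmax n x C' t := fj_le_fmax

lemma mem_Ej_of_mem_Ej_of_eq_add {M : ℝ} (hM : 0 ≤ M) (hle : ∀ i, C' i ≤ C i + M)
    (hj : C' j = C j + M) (ht : t ∈ Ej n x C j) : t ∈ Ej n x C' j := by
  show fj n x C' j t = fmax n x C' t
  rw [fmax_eq_add_of_mem_Ej hM hle hj ht, ← show fj n x C j t = fmax n x C t from ht]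
  unfold fj
  rw [hj]
  ring

lemma volume_biUnion_Ej_lt_top (C : Fin n → ℝ) (S : Finset (Fin n)) :
    volume (⋃ i ∈ S, Ej n x C i) < ⊤ :=
  (measure_mono (iUnion₂_mono fun _ _ => Ej_subset_closedBall)).trans_lt
    (measure_biUnion_lt_top S.finite_toSet fun _ _ => measure_closedBall_lt_top)

lemma sum_Fj_add_mul_volume_le (hx : Injective x) {M : ℝ} (hM : 0 ≤ M)
    (hle : ∀ i, C' i ≤ C i + M) {S : Finset (Fin n)} (hS : ∀ i ∈ S, C' i = C i + M) :
    ∑ i ∈ S, Fj n x C i + M * volume.real (⋃ i ∈ S, Ej n x C i) ≤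
      ∑ i ∈ S, Fj n x C' i := by
  set A := ⋃ i ∈ S, Ej n x C i
  have hshift : ∀ t ∈ A, fmax n x C' t = fmax n x C t + M := fun t ht => by
    obtain ⟨i, hi, hti⟩ := mem_iUnion₂.1 ht
    exact fmax_eq_add_of_mem_Ej hM hle (hS i hi) hti
  have hsub : A ⊆ ⋃ i ∈ S, Ej n x C' i := fun t ht => by
    obtain ⟨i, hi, hti⟩ := mem_iUnion₂.1 ht
    exact mem_biUnion hi (mem_Ej_of_mem_Ej_of_eq_add hM hle (hS i hi) hti)
  calc ∑ i ∈ S, Fj n x C i + M * volume.real A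
      = ∫ t in A, (fmax n x C t + M) := by
        rw [integral_add integrable_fmax.integrableOn
          (integrableOn_const (volume_biUnion_Ej_lt_top C S).ne), setIntegral_const,
          sum_Fj_eq_setIntegral hx, smul_eq_mul, mul_comm]
    _ = ∫ t in A, fmax n x C' t :=
        setIntegral_congr_fun (Finset.measurableSet_biUnion _ fun i _ => measurableSet_Ej)
          fun t ht => (hshift t ht).symm
    _ ≤ ∫ t in ⋃ i ∈ S, Ej n x C' i, fmax n x C' t :=
        setIntegral_mono_set integrable_fmax.integrableOn
          (Eventually.of_forall fun t => fmax_nonneg) hsub.eventuallyLE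
    _ = ∑ i ∈ S, Fj n x C' i := (sum_Fj_eq_setIntegral hx C' S).symm

lemma le_of_Fj_eq (hx : Injective x) (hpos : ∀ j, 0 < Fj n x C j)
    (hF : ∀ j, Fj n x C' j = Fj n x C j) : C' ≤ C := by
  by_contra hCC'
  obtain ⟨k, hk⟩ : ∃ k, C k < C' k := by simpa [Pi.le_def] using hCC'
  have : Nonempty (Fin n) := ⟨k⟩
  set M := Finset.univ.sup' Finset.univ_nonempty fun i => C' i - C i
  have hM : 0 < M :=
    (sub_pos.2 hk).trans_le (Finset.le_sup' (fun i => C' i - C i) (Finset.mem_univ k))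
  have hle : ∀ i, C' i ≤ C i + M := fun i => by
    linarith [Finset.le_sup' (fun i => C' i - C i) (Finset.mem_univ i)]
  set S := Finset.univ.filter fun i => C' i = C i + M
  obtain ⟨j, -, hj⟩ := Finset.exists_mem_eq_sup' Finset.univ_nonempty fun i => C' i - C i
  have hS : S.Nonempty := ⟨j, Finset.mem_filter.2 ⟨Finset.mem_univ j, by linarith⟩⟩
  have key := sum_Fj_add_mul_volume_le hx hM.le hle (S := S) fun i hi =>
    (Finset.mem_filter.1 hi).2
  have hsum : ∑ i ∈ S, Fj n x C' i = ∑ i ∈ S, Fj n x C i := Finset.sum_congr rfl fun i _ => hF i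
  have hApos : 0 < ∫ t in ⋃ i ∈ S, Ej n x C i, fmax n x C t := by
    rw [← sum_Fj_eq_setIntegral hx]
    exact Finset.sum_pos (fun i _ => hpos i) hS
  have hA0 : volume (⋃ i ∈ S, Ej n x C i) ≠ 0 := fun h0 => by
    simp [Measure.restrict_eq_zero.2 h0] at hApos
  have hvol : 0 < volume.real (⋃ i ∈ S, Ej n x C i) :=
    ENNReal.toReal_pos hA0 (volume_biUnion_Ej_lt_top C S).ne
  nlinarith [mul_pos hM hvol]

lemma eq_of_Fvec_eq (hx : Injective x) (hpos : ∀ j, 0 < Fj n x C j)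
    (h : Fvec n x C' = Fvec n x C) : C' = C := by
  have hF : ∀ j, Fj n x C' j = Fj n x C j := congrFun h
  exact le_antisymm (le_of_Fj_eq hx hpos hF)
    (le_of_Fj_eq hx (fun j => hF j ▸ hpos j) fun j => (hF j).symm)

end Uniqueness

noncomputable def fmaxExcept (n : ℕ) (x C : Fin n → ℝ) (j : Fin n) (t : ℝ) : ℝ :=
  max (⨆ i : {i // i ≠ j}, fj n x C i t) 0

noncomputable def energy (n : ℕ) (x C : Fin n → ℝ) : ℝ :=
  ∫ t, fmax n x C t ^ 2 / 2

section Existence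

variable {n : ℕ} {x : Fin n → ℝ}

lemma fmax_update (C : Fin n → ℝ) (j : Fin n) (s t : ℝ) :
    fmax n x (update C j s) t = max (s - (t - x j) ^ 2) (fmaxExcept n x C j t) := by
  refine le_antisymm (fmax_le (fun i => ?_) ((le_max_right _ _).trans (le_max_right _ _)))
    (max_le ?_ (max_le (Real.iSup_le (fun i => ?_) fmax_nonneg) fmax_nonneg))
  · by_cases hi : i = j
    · subst hi
      simp [fj]
    · have : fj n x C i t ≤ fmaxExcept n x C j t :=
        (le_ciSup (f := fun i : {i // i ≠ j} => fj n x C i t) (Set.finite_range _).bddAbove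
          ⟨i, hi⟩).trans (le_max_left _ _)
      simpa [fj, update_of_ne hi] using this.trans (le_max_right _ _)
  · simpa [fj] using fj_le_fmax (x := x) (C := update C j s) (j := j) (t := t)
  · simpa [fj, update_of_ne i.2] using fj_le_fmax (x := x) (C := update C j s) (j := i) (t := t)

lemma fmax_eq_max_fmaxExcept (C : Fin n → ℝ) (j : Fin n) (t : ℝ) :
    fmax n x C t = max (fj n x C j t) (fmaxExcept n x C j t) := by
  have := fmax_update (x := x) C j (C j) t
  rwa [update_eq_self] at this

lemma fmaxExcept_eq_zero_or_exists (C : Fin n → ℝ) (j : Fin n) (t : ℝ) :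
    fmaxExcept n x C j t = 0 ∨ ∃ i ≠ j, fj n x C i t = fmaxExcept n x C j t := by
  rcases max_iSup_zero_eq_zero_or_exists fun i : {i // i ≠ j} => fj n x C i t with h | ⟨i, hi⟩
  exacts [Or.inl h, Or.inr ⟨i, i.2, hi⟩]

lemma ae_hasDerivAt_fmax_update_sq (hx : Injective x) (C : Fin n → ℝ) (j : Fin n) :
    ∀ᵐ t, HasDerivAt (fun s => fmax n x (update C j s) t ^ 2 / 2)
      ((Ej n x C j).indicator (fmax n x C) t) (C j) := by
  have hties : ∀ᵐ t, ∀ i, i ≠ j → fj n x C i t ≠ fj n x C j t :=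
    ae_all_iff.2 fun i => by
      by_cases hi : i = j
      · exact Eventually.of_forall fun _ h => absurd hi h
      · filter_upwards [ae_fj_ne_fj (C := C) (hx.ne hi)] with t ht _ using ht
  filter_upwards [ae_fj_ne_zero (x := x) (C := C) (j := j), hties] with t hzero hties
  have hne : fj n x C j t ≠ fmaxExcept n x C j t := by
    rcases fmaxExcept_eq_zero_or_exists (x := x) C j t with h | ⟨i, hij, hi⟩
    · rwa [h]
    · rw [← hi]
      exact (hties i hij).symm
  have hmax := fmax_eq_max_fmaxExcept (x := x) C j t
  set R := fmaxExcept n x C j t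
  simp only [fmax_update]
  convert hasDerivAt_max_sub_sq_div_two (s₀ := C j) (q := (t - x j) ^ 2) hne using 1
  change _ = if R < fj n x C j t then fj n x C j t else 0
  by_cases h : R < fj n x C j t
  · have hfmax : fmax n x C t = fj n x C j t := hmax.trans (max_eq_left h.le)
    rw [if_pos h, indicator_of_mem (show t ∈ Ej n x C j from hfmax.symm), hfmax]
  · have hfmax : fmax n x C t = R := hmax.trans (max_eq_right (not_lt.1 h))
    rw [if_neg h, indicator_of_notMem (show t ∉ Ej n x C j from fun ht => hne (ht.trans hfmax))]

lemma hasDerivAt_energy_update (hx : Injective x) (C : Fin n → ℝ) (j : Fin n) :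
    HasDerivAt (fun s => energy n x (update C j s)) (Fj n x C j) (C j) := by
  set B := fmax n x (update C j (C j + 1))
  have hB : ∀ s ∈ Iic (C j + 1), ∀ t, fmax n x (update C j s) t ≤ B t := fun s hs t => by
    simp only [B, fmax_update]
    exact max_le_max_right _ (sub_le_sub_right (mem_Iic.1 hs) _)
  have hlip : ∀ t, LipschitzOnWith (Real.nnabs (B t))
      (fun s => fmax n x (update C j s) t ^ 2 / 2) (Iic (C j + 1)) := fun t =>
    LipschitzOnWith.of_dist_le_mul fun s hs s' hs' => by
      rw [Real.coe_nnabs, abs_of_nonneg fmax_nonneg, Real.dist_eq, Real.dist_eq]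
      refine (abs_sq_div_two_sub_sq_div_two_le fmax_nonneg fmax_nonneg (hB s hs t)
        (hB s' hs' t)).trans (mul_le_mul_of_nonneg_left ?_ fmax_nonneg)
      simp only [fmax_update]
      exact (abs_max_sub_max_le_abs _ _ _).trans_eq (by rw [sub_sub_sub_cancel_right])
  have key := hasDerivAt_integral_of_dominated_loc_of_lip (Iic_mem_nhds (lt_add_one (C j)))
    (Eventually.of_forall fun s => ((continuous_fmax.pow 2).div_const 2).aestronglyMeasurable)
    (by simpa using integrable_fmax_sq (x := x) (C := C))
    ((integrable_fmax.indicator measurableSet_Ej).aestronglyMeasurable)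
    (Eventually.of_forall hlip) integrable_fmax (ae_hasDerivAt_fmax_update_sq hx C j)
  rw [integral_indicator measurableSet_Ej, ← Fj_eq_setIntegral] at key
  exact key.2

lemma continuous_energy : Continuous (energy n x) := by
  refine continuous_iff_continuousAt.2 fun C₀ => ?_
  have hnear : ∀ᶠ C in 𝓝 C₀, ∀ i, C i < C₀ i + 1 := eventually_all.2 fun i =>
    (continuous_apply i).continuousAt.eventually_lt continuousAt_const (lt_add_one _)
  refine continuousAt_of_dominated (bound := fun t => fmax n x (fun i => C₀ i + 1) t ^ 2 / 2)
    (Eventually.of_forall fun C => ((continuous_fmax.pow 2).div_const 2).aestronglyMeasurable)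
    (hnear.mono fun C hC => Eventually.of_forall fun t => ?_) integrable_fmax_sq
    (Eventually.of_forall fun t => ((continuous_fmax_apply.pow 2).div_const 2).continuousAt)
  rw [Real.norm_of_nonneg (by positivity)]
  have hmono := fmax_mono (x := x) (t := t) fun i => (hC i).le
  have hnonneg := fmax_nonneg (x := x) (C := C) (t := t)
  gcongr

lemma sq_max_sub_one_div_two_le_energy (C : Fin n → ℝ) (j : Fin n) :
    max (C j - 1) 0 ^ 2 / 2 ≤ energy n x C := by
  have hlow : ∀ t ∈ Icc (x j) (x j + 1), max (C j - 1) 0 ^ 2 / 2 ≤ fmax n x C t ^ 2 / 2 := by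
    intro t ht
    have : C j - 1 ≤ fj n x C j t := by
      unfold fj
      nlinarith [ht.1, ht.2]
    have := max_le (this.trans fj_le_fmax) fmax_nonneg
    gcongr
  calc max (C j - 1) 0 ^ 2 / 2 = ∫ t in Icc (x j) (x j + 1), max (C j - 1) 0 ^ 2 / 2 := by simp
    _ ≤ ∫ t in Icc (x j) (x j + 1), fmax n x C t ^ 2 / 2 :=
      setIntegral_mono_on (integrableOn_const (by simp)) integrable_fmax_sq.integrableOn
        measurableSet_Icc hlow
    _ ≤ energy n x C :=
      setIntegral_le_integral integrable_fmax_sq (Eventually.of_forall fun t => by positivity)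

lemma tendsto_energy_sub_cocompact [Nonempty (Fin n)] {a : Fin n → ℝ} (ha : ∀ j, 0 < a j) :
    Tendsto (fun C => energy n x C - ∑ j, a j * C j) (cocompact _) atTop := by
  obtain ⟨k, hk⟩ := Finite.exists_min a
  have hN : (0 : ℝ) < n := by exact_mod_cast Fin.pos_iff_nonempty.2 ‹_›
  set β := ∑ j, (2 * n * a j ^ 2 + 2 * a j)
  have hbound : ∀ C : Fin n → ℝ, a k * ‖C‖ - β ≤ energy n x C - ∑ j, a j * C j := by
    intro C
    have hsum : ∑ j, (a j * C j + a j * |C j|) ≤ energy n x C + β :=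
      calc ∑ j, (a j * C j + a j * |C j|)
          ≤ ∑ j, (energy n x C / n + (2 * n * a j ^ 2 + 2 * a j)) :=
            Finset.sum_le_sum fun j _ => by
              linarith [mul_add_mul_abs_le (ha j).le hN
                (sq_max_sub_one_div_two_le_energy (x := x) C j)]
        _ = energy n x C + β := by
            rw [Finset.sum_add_distrib, Finset.sum_const, Finset.card_univ, Fintype.card_fin,
              nsmul_eq_mul, mul_div_cancel₀ _ hN.ne']
    have hnorm : a k * ‖C‖ ≤ ∑ j, a j * |C j| := by
      rw [← le_div_iff₀' (ha k)]
      have hterm : ∀ j, 0 ≤ a j * |C j| := fun j => mul_nonneg (ha j).le (abs_nonneg _)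
      refine (pi_norm_le_iff_of_nonneg
        (div_nonneg (Finset.sum_nonneg fun j _ => hterm j) (ha k).le)).2 fun i => ?_
      rw [Real.norm_eq_abs, le_div_iff₀' (ha k)]
      exact (mul_le_mul_of_nonneg_right (hk i) (abs_nonneg _)).trans
        (Finset.single_le_sum (f := fun j => a j * |C j|) (fun j _ => hterm j)
          (Finset.mem_univ i))
    rw [Finset.sum_add_distrib] at hsum
    linarith
  refine tendsto_atTop_mono hbound ?_
  exact tendsto_atTop_add_const_right _ _
    (tendsto_norm_cocompact_atTop.const_mul_atTop (ha k))

lemma exists_Fvec_eq (hx : Injective x) {a : Fin n → ℝ} (ha : ∀ j, 0 < a j) :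
    ∃ C, Fvec n x C = a := by
  rcases isEmpty_or_nonempty (Fin n) with hn | hn
  · exact ⟨0, Subsingleton.elim _ _⟩
  obtain ⟨C, hC⟩ := (continuous_energy.sub (continuous_finsetSum _ fun j _ =>
    continuous_const.mul (continuous_apply j))).exists_forall_le (tendsto_energy_sub_cocompact ha)
  refine ⟨C, funext fun j => ?_⟩
  have hmin : IsLocalMin (fun s => energy n x (update C j s) - ∑ i, a i * update C j s i) (C j) :=
    Eventually.of_forall fun s => by simpa using hC (update C j s)
  exact sub_eq_zero.1 (hmin.hasDerivAt_eq_zero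
    ((hasDerivAt_energy_update hx C j).sub (hasDerivAt_sum_mul_update a C j)))

end Existence

theorem stmt_0_general (n : ℕ) (x : Fin n → ℝ) (hx : StrictMono x)
    (a : Fin n → ℝ) (ha : ∀ j, 0 < a j) :
    ∃! C : Fin n → ℝ, Fvec n x C = a := by
  obtain ⟨C, hC⟩ := exists_Fvec_eq hx.injective ha
  refine ⟨C, hC, fun C' hC' => eq_of_Fvec_eq hx.injective (fun j => ?_) (hC'.trans hC.symm)⟩
  rw [← hC] at ha
  exact ha j

/-- For every vector `a` with all positive components there is a unique `C`
with `F(C) = a`. -/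
theorem stmt_0 (n : ℕ) (hn : 1 ≤ n) (x : Fin n → ℝ) (hx : StrictMono x)
    (a : Fin n → ℝ) (ha : ∀ j, 0 < a j) :
    ∃! C : Fin n → ℝ, Fvec n x C = a :=
  stmt_0_general n x hx a ha
end

section
/- Let π be a Nash equilibrium with equilibrium density f, and for each j let C_j = min_{y ∈ ℝ} J(x_j, y, f) and E_j = argmin_{y ∈ ℝ} J(x_j, y, f). Then for every j, E_j = {y ∈ ℝ : C_j − (x_j − y)^2 ≥ max(C_k − (x_k − y)^2, 0) for all k = 1, …, n}. -/
open MeasureTheory Set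

/-- The cost `J(x, y, f) = (x - y)^2 + f(y)`. -/
noncomputable def Jcost (f : ℝ → ℝ) (x y : ℝ) : ℝ := (x - y) ^ 2 + f y

/-- The support of a measure `π` on `ℝ × ℝ`: points all of whose open
neighborhoods have positive measure. -/
def msupport (π : Measure (ℝ × ℝ)) : Set (ℝ × ℝ) :=
  {p | ∀ U : Set (ℝ × ℝ), IsOpen U → p ∈ U → 0 < π U}

/-- `π` is a Nash equilibrium with equilibrium density `f` for the initial
measure `m = ∑ j, a_j δ_{x_j}`:
`π` is a Borel probability measure on `ℝ × ℝ`, `f` is continuous, nonnegative,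
with total integral 1; the first marginal of `π` is `m`; the second marginal of
`π` has density `f` with respect to Lebesgue measure; and for `π`-a.e. `(x, y)`,
`y` minimizes `J(x, ·, f)`. -/
def IsNash (n : ℕ) (x a : Fin n → ℝ) (π : Measure (ℝ × ℝ)) (f : ℝ → ℝ) : Prop :=
  IsProbabilityMeasure π ∧
  Continuous f ∧ (∀ y, 0 ≤ f y) ∧ (∫ y, f y) = 1 ∧
  π.map Prod.fst = ∑ j : Fin n, ENNReal.ofReal (a j) • Measure.dirac (x j) ∧
  π.map Prod.snd = volume.withDensity (fun y => ENNReal.ofReal (f y)) ∧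
  (∀ᵐ p ∂π, ∀ z : ℝ, Jcost f p.1 p.2 ≤ Jcost f p.1 z)

/-
At a Nash equilibrium every player `x_k` sits at a minimiser of `J(x_k, ·, f)`, so wherever the
population has mass, `f(y) = C_k - (x_k - y)^2` for some `k`. The open set where `f` exceeds every
`(C_k - (x_k - y)^2)_+` therefore carries no mass of `π`; since `f` is continuous and is the density
of the second marginal, that set is empty. Together with `C_k ≤ J(x_k, y, f)` and `f ≥ 0` this gives
`f(y) = max_k (C_k - (x_k - y)^2)_+`, from which the description of the argmin sets is immediate.
-/

theorem ae_fst_mem_range_of_map_fst_eq_sum_dirac {α β ι : Type*} [MeasurableSpace α]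
    [MeasurableSingletonClass α] [MeasurableSpace β] [Fintype ι] {π : Measure (α × β)}
    {x : ι → α} {c : ι → ENNReal} (h : π.map Prod.fst = ∑ j, c j • Measure.dirac (x j)) :
    ∀ᵐ p ∂π, p.1 ∈ range x := by
  refine ae_of_ae_map measurable_fst.aemeasurable (ae_iff.2 ?_)
  simp only [h, Measure.finsetSum_apply, Measure.smul_apply, smul_eq_mul]
  refine Finset.sum_eq_zero fun k _ => ?_
  simp

theorem withDensity_ofReal_pos_of_isOpen {X : Type*} [TopologicalSpace X] [MeasurableSpace X]
    [OpensMeasurableSpace X] {μ : Measure X} [μ.IsOpenPosMeasure] {f : X → ℝ}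
    (hf : Continuous f) {U : Set X} (hU : IsOpen U) (hne : U.Nonempty)
    (hpos : ∀ y ∈ U, 0 < f y) :
    0 < μ.withDensity (fun y => ENNReal.ofReal (f y)) U := by
  rw [pos_iff_ne_zero, Ne, withDensity_apply_eq_zero' (by fun_prop)]
  have : {y | ENNReal.ofReal (f y) ≠ 0} ∩ U = U :=
    inter_eq_right.2 fun y hy => by simpa using hpos y hy
  rw [this]
  exact (hU.measure_pos μ hne).ne'

namespace IsNash

variable {n : ℕ} {x a : Fin n → ℝ} {π : Measure (ℝ × ℝ)} {f : ℝ → ℝ} {C : Fin n → ℝ}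

theorem ae_exists_jcost_eq (hNash : IsNash n x a π f)
    (hC : ∀ j, IsLeast (range fun y => Jcost f (x j) y) (C j)) :
    ∀ᵐ p ∂π, ∃ k, Jcost f (x k) p.2 = C k := by
  obtain ⟨-, -, -, -, hfst, -, hmin⟩ := hNash
  filter_upwards [hmin, ae_fst_mem_range_of_map_fst_eq_sum_dirac hfst] with p hp ⟨k, hk⟩
  refine ⟨k, ((hC k).unique ⟨⟨p.2, rfl⟩, ?_⟩).symm⟩
  rintro _ ⟨z, rfl⟩
  exact hk ▸ hp z

theorem exists_jcost_le_of_pos (hNash : IsNash n x a π f)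
    (hC : ∀ j, IsLeast (range fun y => Jcost f (x j) y) (C j)) {y : ℝ} (hy : 0 < f y) :
    ∃ k, Jcost f (x k) y ≤ C k := by
  by_contra! hy'
  have hopt := hNash.ae_exists_jcost_eq hC
  obtain ⟨-, hfc, -, -, -, hsnd, -⟩ := hNash
  set S : Set ℝ := {y | 0 < f y} ∩ ⋂ k, {y | C k < Jcost f (x k) y}
  have hS : IsOpen S :=
    (isOpen_lt continuous_const hfc).inter <| isOpen_iInter_of_finite fun k =>
      isOpen_lt continuous_const (by unfold Jcost; fun_prop)
  have hmass_pos : 0 < π.map Prod.snd S := by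
    rw [hsnd]
    exact withDensity_ofReal_pos_of_isOpen hfc hS ⟨y, hy, mem_iInter.2 hy'⟩ fun z hz => hz.1
  have hmass_zero : π.map Prod.snd S = 0 := by
    rw [Measure.map_apply measurable_snd hS.measurableSet, measure_eq_zero_iff_ae_notMem]
    filter_upwards [hopt] with p ⟨k, hk⟩ hpS
    exact (mem_iInter.1 hpS.2 k).ne' hk
  exact hmass_pos.ne' hmass_zero

end IsNash

theorem stmt_2_general (n : ℕ) (x : Fin n → ℝ)
    (a : Fin n → ℝ)
    (π : Measure (ℝ × ℝ)) (f : ℝ → ℝ) (hNash : IsNash n x a π f)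
    (C : Fin n → ℝ)
    (hC : ∀ j, IsLeast (Set.range fun y => Jcost f (x j) y) (C j)) :
    ∀ j, {y : ℝ | Jcost f (x j) y = C j} =
      {y : ℝ | ∀ k, max (C k - (x k - y) ^ 2) 0 ≤ C j - (x j - y) ^ 2} := by
  have hf0 : ∀ y, 0 ≤ f y := hNash.2.2.1
  intro j
  ext y
  have hCj : C j ≤ Jcost f (x j) y := (hC j).2 ⟨y, rfl⟩
  simp only [mem_ofPred_eq]
  constructor
  · intro hy k
    have hCk : C k ≤ Jcost f (x k) y := (hC k).2 ⟨y, rfl⟩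
    unfold Jcost at hy hCk
    exact max_le (by linarith) (by linarith [hf0 y])
  · intro hy
    refine le_antisymm ?_ hCj
    rcases (hf0 y).eq_or_lt with hf | hf
    · have henv_j := le_max_right (C j - (x j - y) ^ 2) 0 |>.trans (hy j)
      unfold Jcost
      linarith
    · obtain ⟨k, hk⟩ := hNash.exists_jcost_le_of_pos hC hf
      have henv_k := le_max_left (C k - (x k - y) ^ 2) 0 |>.trans (hy k)
      unfold Jcost at hk ⊢
      linarith

/-- With `C_j = min_y J(x_j, y, f)` and `E_j = argmin_y J(x_j, y, f)`, one has
`E_j = {y : C_j - (x_j - y)^2 ≥ (C_k - (x_k - y)^2)_+ for all k}`. -/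
theorem stmt_2 (n : ℕ) (hn : 1 ≤ n) (x : Fin n → ℝ) (hx : StrictMono x)
    (a : Fin n → ℝ) (ha : ∀ j, 0 < a j) (hsum : ∑ j, a j = 1)
    (π : Measure (ℝ × ℝ)) (f : ℝ → ℝ) (hNash : IsNash n x a π f)
    (C : Fin n → ℝ)
    (hC : ∀ j, IsLeast (Set.range fun y => Jcost f (x j) y) (C j)) :
    ∀ j, {y : ℝ | Jcost f (x j) y = C j} =
      {y : ℝ | ∀ k, max (C k - (x k - y) ^ 2) 0 ≤ C j - (x j - y) ^ 2} :=
  stmt_2_general n x a π f hNash C hC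
end

section
/- Let π be a Nash equilibrium with equilibrium density f, and for each j let C_j = min_{y ∈ ℝ} J(x_j, y, f) and E_j = argmin_{y ∈ ℝ} J(x_j, y, f). Then for every y ∈ ℝ, f(y) = max{0, C_1 − (x_1 − y)^2, …, C_n − (x_n − y)^2}, and E_j = {y ∈ ℝ : f(y) = C_j − (x_j − y)^2} for each j. -/
open MeasureTheory Set

/-!
Every `C j - (x j - y) ^ 2` is at most `f y` because `C j` is the minimum of `J(x j, ·, f)`.
On the open set `S` where `f` is positive and strictly exceeds all of them, no player can sit
in equilibrium: a.e. `(x, y)` has `x = x j` for some `j` and `y` minimizes `J(x j, ·, f)`, i.e.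
`f y = C j - (x j - y) ^ 2`. Hence the second marginal, which has density `f`, gives `S` mass
zero; since `f` is continuous, `S` is open, and `f > 0` on `S` forces `S = ∅`.
-/

theorem Jcost_eq_iff {f : ℝ → ℝ} {x y c : ℝ} : Jcost f x y = c ↔ f y = c - (x - y) ^ 2 := by
  rw [Jcost, eq_sub_iff_add_eq, add_comm]

theorem sub_sq_le_of_isLeast_range_Jcost {f : ℝ → ℝ} {x c : ℝ}
    (hc : IsLeast (range (Jcost f x)) c) (y : ℝ) : c - (x - y) ^ 2 ≤ f y := by
  have := hc.2 ⟨y, rfl⟩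
  rw [Jcost] at this
  linarith

theorem Jcost_eq_of_isLeast_of_forall_le {f : ℝ → ℝ} {x y c : ℝ}
    (hc : IsLeast (range (Jcost f x)) c) (hy : ∀ z, Jcost f x y ≤ Jcost f x z) :
    Jcost f x y = c :=
  IsLeast.unique (s := range (Jcost f x)) ⟨⟨y, rfl⟩, forall_mem_range.2 hy⟩ hc

theorem le_max_ciSup_zero_of_not_forall_lt {ι : Type*} [Finite ι] {g : ι → ℝ} {t : ℝ}
    (h : ¬(0 < t ∧ ∀ i, g i < t)) : t ≤ max (⨆ i, g i) 0 := by
  simp only [not_and_or, not_lt, not_forall] at h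
  rcases h with h | ⟨i, hi⟩
  · exact h.trans (le_max_right _ _)
  · exact hi.trans ((le_ciSup (Finite.bddAbove_range g) i).trans (le_max_left _ _))

theorem ae_mem_range_of_eq_sum_smul_dirac {α ι : Type*} [MeasurableSpace α]
    [MeasurableSingletonClass α] [Fintype ι] {μ : Measure α} {c : ι → ENNReal} {x : ι → α}
    (h : μ = ∑ j, c j • Measure.dirac (x j)) : ∀ᵐ a ∂μ, a ∈ range x := by
  rw [ae_iff, h]
  simp [Measure.dirac_apply]

theorem IsOpen.eq_empty_of_withDensity_eq_zero {X : Type*} [TopologicalSpace X]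
    [MeasurableSpace X] {μ : Measure X} [μ.IsOpenPosMeasure] {g : X → ENNReal}
    (hg : Measurable g) {U : Set X} (hU : IsOpen U) (hpos : U ⊆ {y | g y ≠ 0})
    (h : μ.withDensity g U = 0) : U = ∅ := by
  rwa [withDensity_apply_eq_zero hg, inter_eq_right.2 hpos, hU.measure_eq_zero_iff μ] at h

theorem IsNash.ae_exists_Jcost_eq {n : ℕ} {x a : Fin n → ℝ} {π : Measure (ℝ × ℝ)}
    {f : ℝ → ℝ} {C : Fin n → ℝ} (h : IsNash n x a π f)
    (hC : ∀ j, IsLeast (range (Jcost f (x j))) (C j)) :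
    ∀ᵐ p ∂π, ∃ j, Jcost f (x j) p.2 = C j := by
  obtain ⟨-, -, -, -, hfst, -, hmin⟩ := h
  have hx : ∀ᵐ p ∂π, p.1 ∈ range x :=
    ae_of_ae_map measurable_fst.aemeasurable (ae_mem_range_of_eq_sum_smul_dirac hfst)
  filter_upwards [hx, hmin] with p ⟨j, hj⟩ hp
  exact ⟨j, Jcost_eq_of_isLeast_of_forall_le (hC j) (hj ▸ hp)⟩

theorem stmt_3_general (n : ℕ) (x : Fin n → ℝ) (a : Fin n → ℝ)
    (π : Measure (ℝ × ℝ)) (f : ℝ → ℝ) (hNash : IsNash n x a π f)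
    (C : Fin n → ℝ)
    (hC : ∀ j, IsLeast (Set.range fun y => Jcost f (x j) y) (C j)) :
    (∀ y : ℝ, f y = max (⨆ j : Fin n, (C j - (x j - y) ^ 2)) 0) ∧
    (∀ j, {y : ℝ | Jcost f (x j) y = C j} =
      {y : ℝ | f y = C j - (x j - y) ^ 2}) := by
  have hE := hNash.ae_exists_Jcost_eq hC
  obtain ⟨-, hf_cont, hf_nonneg, -, -, hsnd, -⟩ := hNash
  set S := {y | 0 < f y ∧ ∀ j, C j - (x j - y) ^ 2 < f y}
  have hS_open : IsOpen S := by
    simp only [S, ofPred_and, ofPred_forall]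
    exact (isOpen_lt continuous_const hf_cont).inter
      (isOpen_iInter_of_finite fun j => isOpen_lt (by fun_prop) hf_cont)
  have hS_null : π.map Prod.snd S = 0 := by
    rw [measure_eq_zero_iff_ae_notMem,
      ae_map_iff measurable_snd.aemeasurable hS_open.measurableSet.compl]
    filter_upwards [hE] with p ⟨j, hj⟩ hpS
    exact (hpS.2 j).ne' (Jcost_eq_iff.1 hj)
  have hS_empty : S = ∅ :=
    hS_open.eq_empty_of_withDensity_eq_zero (ENNReal.measurable_ofReal.comp hf_cont.measurable)
      (fun y hy => (ENNReal.ofReal_pos.2 hy.1).ne') (hsnd ▸ hS_null)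
  refine ⟨fun y => le_antisymm ?_ ?_, fun j => ext fun y => Jcost_eq_iff⟩
  · exact le_max_ciSup_zero_of_not_forall_lt (eq_empty_iff_forall_notMem.1 hS_empty y)
  · exact max_le (Real.iSup_le (fun j => sub_sq_le_of_isLeast_range_Jcost (hC j) y)
      (hf_nonneg y)) (hf_nonneg y)

/-- With `C_j = min_y J(x_j, y, f)` and `E_j = argmin_y J(x_j, y, f)`:
`f(y) = max{0, C_1 - (x_1 - y)^2, …, C_n - (x_n - y)^2}` for every `y`, and
`E_j = {y : f(y) = C_j - (x_j - y)^2}` for each `j`. -/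
theorem stmt_3 (n : ℕ) (hn : 1 ≤ n) (x : Fin n → ℝ) (hx : StrictMono x)
    (a : Fin n → ℝ) (ha : ∀ j, 0 < a j) (hsum : ∑ j, a j = 1)
    (π : Measure (ℝ × ℝ)) (f : ℝ → ℝ) (hNash : IsNash n x a π f)
    (C : Fin n → ℝ)
    (hC : ∀ j, IsLeast (Set.range fun y => Jcost f (x j) y) (C j)) :
    (∀ y : ℝ, f y = max (⨆ j : Fin n, (C j - (x j - y) ^ 2)) 0) ∧
    (∀ j, {y : ℝ | Jcost f (x j) y = C j} =
      {y : ℝ | f y = C j - (x j - y) ^ 2}) :=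
  stmt_3_general n x a π f hNash C hC
end

section
/- If C ∈ 𝔾, then for every j ∈ {1, …, n} the set E_j^{(C)} is a compact interval with nonempty interior, i.e. E_j^{(C)} = [α_j, β_j] for some real numbers α_j < β_j. -/
open MeasureTheory Set
open scoped Classical

/-- If `C ∈ 𝔾`, then every `E_j^{(C)}` is a compact interval `[α_j, β_j]` with
`α_j < β_j`. -/
theorem stmt_6 (n : ℕ) (hn : 1 ≤ n) (x : Fin n → ℝ) (hx : StrictMono x)
    (C : Fin n → ℝ) (hC : C ∈ Gset n x) :
    ∀ j : Fin n, ∃ α β : ℝ, α < β ∧ Ej n x C j = Set.Icc α β := by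
  intro j
  have hFj := hC j
  haveI : Nonempty (Fin n) := ⟨j⟩
  -- characterization
  have hchar : ∀ t, t ∈ Ej n x C j ↔ (∀ i, fj n x C i t ≤ fj n x C j t) ∧ 0 ≤ fj n x C j t := by
    intro t
    have hbdd : BddAbove (Set.range fun i => fj n x C i t) := Set.Finite.bddAbove (Set.finite_range _)
    constructor
    · intro h
      have h' : fmax n x C t ≤ fj n x C j t := le_of_eq h.symm
      have h1 : (⨆ i, fj n x C i t) ≤ fj n x C j t := le_trans (le_max_left _ _) h'
      have h2 : (0:ℝ) ≤ fj n x C j t := le_trans (le_max_right _ _) h'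
      exact ⟨fun i => le_trans (le_ciSup hbdd i) h1, h2⟩
    · rintro ⟨h1, h2⟩
      have : fmax n x C t ≤ fj n x C j t := max_le (ciSup_le h1) h2
      exact le_antisymm (le_trans (le_ciSup hbdd j) (le_max_left _ _)) this
  -- nonempty
  have hne : (Ej n x C j).Nonempty := by
    by_contra h
    rw [Fj, if_neg h] at hFj
    exact lt_irrefl 0 hFj
  -- positive measure
  have hvol : volume (Ej n x C j) ≠ 0 := by
    intro h
    rw [Fj, if_pos hne] at hFj
    rw [show (∫ t in Ej n x C j, fmax n x C t) = 0 from by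
      rw [Measure.restrict_eq_zero.mpr h, integral_zero_measure]] at hFj
    exact lt_irrefl 0 hFj
  -- closed
  have hcl : IsClosed (Ej n x C j) := by
    have : Ej n x C j = (⋂ i, {t | fj n x C i t ≤ fj n x C j t}) ∩ {t | 0 ≤ fj n x C j t} := by
      ext t; simp [hchar t, Set.mem_iInter]
    rw [this]
    refine IsClosed.inter (isClosed_iInter fun i => ?_) ?_
    · exact isClosed_le (by unfold fj; continuity) (by unfold fj; continuity)
    · exact isClosed_le continuous_const (by unfold fj; continuity)
  -- convex
  have hconv : Convex ℝ (Ej n x C j) := by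
    intro u hu v hv a b ha hb hab
    rw [hchar] at hu hv ⊢
    simp only [smul_eq_mul]
    have ha' : a = 1 - b := by linarith
    subst ha'
    constructor
    · intro i
      have h1 := hu.1 i
      have h2 := hv.1 i
      unfold fj at h1 h2 ⊢
      nlinarith [mul_nonneg ha (sub_nonneg.mpr h1), mul_nonneg hb (sub_nonneg.mpr h2), sq_nonneg (u - v)]
    · have h1 := hu.2
      have h2 := hv.2
      unfold fj at h1 h2 ⊢
      nlinarith [mul_nonneg ha h1, mul_nonneg hb h2, mul_nonneg (mul_nonneg ha hb) (sq_nonneg (u - v))]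
  -- bounded
  have hsub : Ej n x C j ⊆ Set.Icc (x j - Real.sqrt (C j)) (x j + Real.sqrt (C j)) := by
    intro t ht
    have h2 : 0 ≤ fj n x C j t := ((hchar t).mp ht).2
    unfold fj at h2
    have hsq : (t - x j) ^ 2 ≤ C j := by linarith
    have : |t - x j| ≤ Real.sqrt (C j) := by
      rw [← Real.sqrt_sq_eq_abs]; exact Real.sqrt_le_sqrt hsq
    rw [abs_le] at this
    constructor <;> linarith [this.1, this.2]
  have hbb : BddBelow (Ej n x C j) := BddBelow.mono hsub (bddBelow_Icc)
  have hba : BddAbove (Ej n x C j) := BddAbove.mono hsub (bddAbove_Icc)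
  set α := sInf (Ej n x C j) with hα
  set β := sSup (Ej n x C j) with hβ
  have hαmem : α ∈ Ej n x C j := hcl.csInf_mem hne hbb
  have hβmem : β ∈ Ej n x C j := hcl.csSup_mem hne hba
  have hEq : Ej n x C j = Set.Icc α β := by
    apply le_antisymm
    · intro t ht; exact ⟨csInf_le hbb ht, le_csSup hba ht⟩
    · exact hconv.ordConnected.out hαmem hβmem
  refine ⟨α, β, ?_, hEq⟩
  by_contra h
  push_neg at h
  apply hvol
  rw [hEq]
  rw [Real.volume_Icc]
  exact ENNReal.ofReal_eq_zero.mpr (by linarith)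
end

section
/- Let C ∈ 𝔾 and write E_j^{(C)} = [α_j, β_j]. Then for every j < n, min{γ_{ij}(C) : i > j} = γ_{j(j+1)}(C), and for every j > 1, max{γ_{ij}(C) : i < j} = γ_{(j−1)j}(C). Moreover β_j = min{γ_{j(j+1)}(C), x_j + √(C_j)} for j < n and β_n = x_n + √(C_n), while α_j = max{γ_{(j−1)j}(C), x_j − √(C_j)} for j > 1 and α_1 = x_1 − √(C_1). -/
open MeasureTheory Set
open scoped Classical

section helpers
variable {n : ℕ} {x C : Fin n → ℝ}

lemma gam_symm {i j : Fin n} (hij : x i ≠ x j) : gam n x C i j = gam n x C j i := by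
  unfold gam
  have h1 : x j - x i ≠ 0 := sub_ne_zero.mpr (Ne.symm hij)
  have h2 : x i - x j ≠ 0 := sub_ne_zero.mpr hij
  field_simp
  ring

lemma fj_le_left {i j : Fin n} (h : x i < x j) (t : ℝ) :
    fj n x C i t ≤ fj n x C j t ↔ gam n x C i j ≤ t := by
  have hd : (0:ℝ) < 2 * (x j - x i) := by linarith
  have h1 : gam n x C i j ≤ t ↔ (C i - C j) / (2 * (x j - x i)) ≤ t - (x i + x j) / 2 := by
    unfold gam; constructor <;> intro hh <;> linarith
  rw [h1, div_le_iff₀ hd]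
  unfold fj
  have key : (t - (x i + x j) / 2) * (2 * (x j - x i)) = (t - x i) ^ 2 - (t - x j) ^ 2 := by ring
  rw [key]
  constructor <;> intro hh <;> linarith

lemma fj_le_right {i j : Fin n} (h : x j < x i) (t : ℝ) :
    fj n x C i t ≤ fj n x C j t ↔ t ≤ gam n x C i j := by
  have hd : 2 * (x j - x i) < 0 := by linarith
  have h1 : t ≤ gam n x C i j ↔ (t - (x i + x j) / 2) ≤ (C i - C j) / (2 * (x j - x i)) := by
    unfold gam; constructor <;> intro hh <;> linarith
  rw [h1, le_div_iff_of_neg hd]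
  have key : (t - (x i + x j) / 2) * (2 * (x j - x i)) = (t - x i) ^ 2 - (t - x j) ^ 2 := by ring
  rw [key]
  unfold fj
  constructor <;> intro hh <;> linarith

lemma fj_gam_eq {i j : Fin n} (h : x i < x j) :
    fj n x C i (gam n x C i j) = fj n x C j (gam n x C i j) := by
  have h1 : fj n x C i (gam n x C i j) ≤ fj n x C j (gam n x C i j) :=
    (fj_le_left h _).mpr le_rfl
  have h2 : fj n x C j (gam n x C i j) ≤ fj n x C i (gam n x C i j) := by
    rw [fj_le_right (i := j) (j := i) h, gam_symm h.ne]
  exact le_antisymm h1 h2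

lemma mem_Ej_iff (hn : 1 ≤ n) {j : Fin n} (t : ℝ) :
    t ∈ Ej n x C j ↔ (∀ i, fj n x C i t ≤ fj n x C j t) ∧ 0 ≤ fj n x C j t := by
  have : Nonempty (Fin n) := ⟨⟨0, hn⟩⟩
  have hbdd : BddAbove (Set.range fun i => fj n x C i t) := (Set.finite_range _).bddAbove
  constructor
  · intro ht
    have ht' : fj n x C j t = fmax n x C t := ht
    constructor
    · intro i
      rw [ht']
      exact le_trans (le_ciSup hbdd i) (le_max_left _ _)
    · rw [ht']; exact le_max_right _ _
  · rintro ⟨h1, h2⟩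
    have hle : fmax n x C t ≤ fj n x C j t :=
      max_le ((ciSup_le_iff hbdd).mpr h1) h2
    exact le_antisymm (le_trans (le_ciSup hbdd j) (le_max_left _ _)) hle

lemma mem_Ej_iff' (hn : 1 ≤ n) (hx : StrictMono x) {j : Fin n} (hCj : 0 ≤ C j) (t : ℝ) :
    t ∈ Ej n x C j ↔ (∀ i, i < j → gam n x C i j ≤ t) ∧ (∀ i, j < i → t ≤ gam n x C i j) ∧
      x j - Real.sqrt (C j) ≤ t ∧ t ≤ x j + Real.sqrt (C j) := by
  have key : 0 ≤ fj n x C j t ↔ x j - Real.sqrt (C j) ≤ t ∧ t ≤ x j + Real.sqrt (C j) := by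
    unfold fj
    constructor
    · intro h0
      have h1 : |t - x j| ≤ Real.sqrt (C j) := by
        rw [← Real.sqrt_sq_eq_abs]
        exact Real.sqrt_le_sqrt (by linarith)
      rw [abs_le] at h1
      constructor <;> linarith [h1.1, h1.2]
    · rintro ⟨ha, hb⟩
      have h1 : |t - x j| ≤ Real.sqrt (C j) := abs_le.mpr ⟨by linarith, by linarith⟩
      have h2 : (t - x j) ^ 2 ≤ C j := by
        have h3 := pow_le_pow_left₀ (abs_nonneg _) h1 2
        rwa [sq_abs, Real.sq_sqrt hCj] at h3
      linarith
  rw [mem_Ej_iff hn, key]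
  constructor
  · rintro ⟨h1, h2⟩
    exact ⟨fun i hi => (fj_le_left (hx hi) t).mp (h1 i),
      fun i hi => (fj_le_right (hx hi) t).mp (h1 i), h2⟩
  · rintro ⟨h1, h2, h3⟩
    refine ⟨fun i => ?_, h3⟩
    rcases lt_trichotomy i j with hij | rfl | hij
    · exact (fj_le_left (hx hij) t).mpr (h1 i hij)
    · exact le_rfl
    · exact (fj_le_right (hx hij) t).mpr (h2 i hij)

end helpers

/-- For `C ∈ 𝔾` with `E_j^{(C)} = [α_j, β_j]`:
`min{γ_{ij} : i > j} = γ_{j(j+1)}` (for `j < n`),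
`max{γ_{ij} : i < j} = γ_{(j-1)j}` (for `j > 1`),
`β_j = min{γ_{j(j+1)}, x_j + √C_j}` for `j < n` and `β_n = x_n + √C_n`, and
`α_j = max{γ_{(j-1)j}, x_j - √C_j}` for `j > 1` and `α_1 = x_1 - √C_1`. -/
theorem stmt_7 (n : ℕ) (hn : 1 ≤ n) (x : Fin n → ℝ) (hx : StrictMono x)
    (C : Fin n → ℝ) (hC : C ∈ Gset n x) (α β : Fin n → ℝ)
    (hE : ∀ j, Ej n x C j = Set.Icc (α j) (β j)) (hαβ : ∀ j, α j ≤ β j) :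
    (∀ j : Fin n, ∀ h : j.val + 1 < n,
      IsLeast ((fun i => gam n x C i j) '' {i : Fin n | j < i})
        (gam n x C ⟨j.val + 1, h⟩ j)) ∧
    (∀ j : Fin n, ∀ _ : 0 < j.val,
      IsGreatest ((fun i => gam n x C i j) '' {i : Fin n | i < j})
        (gam n x C ⟨j.val - 1, lt_of_le_of_lt (Nat.sub_le _ _) j.isLt⟩ j)) ∧
    (∀ j : Fin n, ∀ h : j.val + 1 < n,
      β j = min (gam n x C j ⟨j.val + 1, h⟩) (x j + Real.sqrt (C j))) ∧
    (∀ j : Fin n, j.val + 1 = n → β j = x j + Real.sqrt (C j)) ∧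
    (∀ j : Fin n, ∀ _ : 0 < j.val,
      α j = max (gam n x C ⟨j.val - 1, lt_of_le_of_lt (Nat.sub_le _ _) j.isLt⟩ j)
        (x j - Real.sqrt (C j))) ∧
    (∀ j : Fin n, j.val = 0 → α j = x j - Real.sqrt (C j)) := by
  have hne : ∀ j : Fin n, (Ej n x C j).Nonempty := fun j => by
    rw [hE j]; exact Set.nonempty_Icc.mpr (hαβ j)
  have hmemα : ∀ j : Fin n, α j ∈ Ej n x C j := fun j => by
    rw [hE j]; exact Set.left_mem_Icc.mpr (hαβ j)
  have hmemβ : ∀ j : Fin n, β j ∈ Ej n x C j := fun j => by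
    rw [hE j]; exact Set.right_mem_Icc.mpr (hαβ j)
  have hC0 : ∀ j : Fin n, 0 ≤ C j := by
    intro j
    have h := ((mem_Ej_iff hn _).mp (hmemα j)).2
    unfold fj at h
    nlinarith [sq_nonneg (α j - x j)]
  have hlb : ∀ (j : Fin n) (h : j.val + 1 < n) (i : Fin n), j < i →
      gam n x C ⟨j.val + 1, h⟩ j ≤ gam n x C i j := by
    intro j h i hji
    set j1 : Fin n := ⟨j.val + 1, h⟩ with hj1def
    have hjj1 : j < j1 := by simp [Fin.lt_def, hj1def]
    have hxjj1 : x j < x j1 := hx hjj1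
    rcases eq_or_lt_of_le (show j.val + 1 ≤ i.val from hji) with he | hlt
    · have hi : i = j1 := Fin.ext he.symm
      rw [hi]
    · have hj1i : j1 < i := hlt
      have hxj1i : x j1 < x i := hx hj1i
      have hxji : x j < x i := hxjj1.trans hxj1i
      obtain ⟨t, ht⟩ := hne j1
      have hmem := ((mem_Ej_iff hn t).mp ht).1
      have h1 : gam n x C j j1 ≤ t := (fj_le_left hxjj1 t).mp (hmem j)
      have h2 : t ≤ gam n x C i j1 := (fj_le_right hxj1i t).mp (hmem i)
      rw [gam_symm hxjj1.ne']
      by_cases hcase : gam n x C i j ≤ gam n x C i j1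
      · have hA : fj n x C i (gam n x C i j) ≤ fj n x C j1 (gam n x C i j) :=
          (fj_le_right hxj1i _).mpr hcase
        have hB : fj n x C j (gam n x C i j) = fj n x C i (gam n x C i j) := by
          have hh := fj_gam_eq (C := C) (i := j) (j := i) hxji
          rwa [gam_symm hxji.ne] at hh
        exact (fj_le_left hxjj1 _).mp (by rw [hB]; exact hA)
      · push_neg at hcase
        linarith
  have hub : ∀ (j : Fin n) (_ : 0 < j.val) (i : Fin n), i < j →
      gam n x C i j ≤ gam n x C ⟨j.val - 1, lt_of_le_of_lt (Nat.sub_le _ _) j.isLt⟩ j := by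
    intro j hj i hij
    set j0 : Fin n := ⟨j.val - 1, lt_of_le_of_lt (Nat.sub_le _ _) j.isLt⟩ with hj0def
    have hj0j : j0 < j := by
      rw [Fin.lt_def]
      simp only [hj0def]
      omega
    have hxj0j : x j0 < x j := hx hj0j
    rcases eq_or_lt_of_le (show i.val ≤ j.val - 1 from by omega) with he | hlt
    · have hi : i = j0 := Fin.ext he
      rw [hi]
    · have hij0 : i < j0 := hlt
      have hxij0 : x i < x j0 := hx hij0
      have hxij : x i < x j := hxij0.trans hxj0j
      obtain ⟨t, ht⟩ := hne j0
      have hmem := ((mem_Ej_iff hn t).mp ht).1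
      have h1 : gam n x C i j0 ≤ t := (fj_le_left hxij0 t).mp (hmem i)
      have h2 : t ≤ gam n x C j j0 := (fj_le_right hxj0j t).mp (hmem j)
      rw [gam_symm hxj0j.ne]
      by_cases hcase : gam n x C i j0 ≤ gam n x C i j
      · have hA : fj n x C i (gam n x C i j) ≤ fj n x C j0 (gam n x C i j) :=
          (fj_le_left hxij0 _).mpr hcase
        have hB : fj n x C i (gam n x C i j) = fj n x C j (gam n x C i j) :=
          fj_gam_eq hxij
        exact (fj_le_right hxj0j _).mp (by rw [← hB]; exact hA)
      · push_neg at hcase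
        linarith
  refine ⟨?_, ?_, ?_, ?_, ?_, ?_⟩
  · intro j h
    refine ⟨⟨⟨j.val + 1, h⟩, ?_, rfl⟩,
      by rintro y ⟨i, hi, rfl⟩; exact hlb j h i hi⟩
    show j < (⟨j.val + 1, h⟩ : Fin n)
    rw [Fin.lt_def]
    exact Nat.lt_succ_self _
  · intro j hj
    refine ⟨⟨⟨j.val - 1, lt_of_le_of_lt (Nat.sub_le _ _) j.isLt⟩, ?_, rfl⟩,
      by rintro y ⟨i, hi, rfl⟩; exact hub j hj i hi⟩
    show (⟨j.val - 1, _⟩ : Fin n) < j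
    rw [Fin.lt_def]
    exact Nat.sub_lt hj Nat.one_pos
  · intro j h
    set j1 : Fin n := ⟨j.val + 1, h⟩ with hj1def
    have hjj1 : j < j1 := by simp [Fin.lt_def, hj1def]
    have hxjj1 : x j < x j1 := hx hjj1
    have hcβ := (mem_Ej_iff' hn hx (hC0 j) (β j)).mp (hmemβ j)
    have hcα := (mem_Ej_iff' hn hx (hC0 j) (α j)).mp (hmemα j)
    have hβle : β j ≤ min (gam n x C j j1) (x j + Real.sqrt (C j)) := by
      refine le_min ?_ hcβ.2.2.2
      have h2 := hcβ.2.1 j1 hjj1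
      rwa [gam_symm hxjj1.ne'] at h2
    have hBmem : min (gam n x C j j1) (x j + Real.sqrt (C j)) ∈ Ej n x C j := by
      rw [mem_Ej_iff' hn hx (hC0 j)]
      refine ⟨fun i hi => le_trans (hcα.1 i hi) (le_trans (hαβ j) hβle),
        fun i hi => ?_,
        le_trans hcα.2.2.1 (le_trans (hαβ j) hβle), min_le_right _ _⟩
      calc min (gam n x C j j1) (x j + Real.sqrt (C j)) ≤ gam n x C j j1 := min_le_left _ _
        _ = gam n x C j1 j := (gam_symm hxjj1.ne').symm
        _ ≤ gam n x C i j := hlb j h i hi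
    have hBle : min (gam n x C j j1) (x j + Real.sqrt (C j)) ≤ β j := by
      rw [hE j] at hBmem; exact hBmem.2
    exact le_antisymm hβle hBle
  · intro j hjn
    have hcβ := (mem_Ej_iff' hn hx (hC0 j) (β j)).mp (hmemβ j)
    have hcα := (mem_Ej_iff' hn hx (hC0 j) (α j)).mp (hmemα j)
    have hBmem : x j + Real.sqrt (C j) ∈ Ej n x C j := by
      rw [mem_Ej_iff' hn hx (hC0 j)]
      refine ⟨fun i hi => le_trans (hcα.1 i hi) (le_trans (hαβ j) hcβ.2.2.2),
        fun i hi => absurd i.isLt (by have := Fin.lt_def.mp hi; omega),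
        le_trans hcα.2.2.1 (le_trans (hαβ j) hcβ.2.2.2), le_refl _⟩
    have hBle : x j + Real.sqrt (C j) ≤ β j := by
      rw [hE j] at hBmem; exact hBmem.2
    exact le_antisymm hcβ.2.2.2 hBle
  · intro j hj
    set j0 : Fin n := ⟨j.val - 1, lt_of_le_of_lt (Nat.sub_le _ _) j.isLt⟩ with hj0def
    have hj0j : j0 < j := by
      rw [Fin.lt_def]
      simp only [hj0def]
      omega
    have hxj0j : x j0 < x j := hx hj0j
    have hcβ := (mem_Ej_iff' hn hx (hC0 j) (β j)).mp (hmemβ j)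
    have hcα := (mem_Ej_iff' hn hx (hC0 j) (α j)).mp (hmemα j)
    have hαge : max (gam n x C j0 j) (x j - Real.sqrt (C j)) ≤ α j :=
      max_le (hcα.1 j0 hj0j) hcα.2.2.1
    have hAmem : max (gam n x C j0 j) (x j - Real.sqrt (C j)) ∈ Ej n x C j := by
      rw [mem_Ej_iff' hn hx (hC0 j)]
      refine ⟨fun i hi => le_trans (hub j hj i hi) (le_max_left _ _),
        fun i hi => le_trans hαge (le_trans (hαβ j) (hcβ.2.1 i hi)),
        le_max_right _ _,
        le_trans hαge (le_trans (hαβ j) hcβ.2.2.2)⟩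
    have hAle : α j ≤ max (gam n x C j0 j) (x j - Real.sqrt (C j)) := by
      rw [hE j] at hAmem; exact hAmem.1
    exact le_antisymm hAle hαge
  · intro j hj0
    have hcβ := (mem_Ej_iff' hn hx (hC0 j) (β j)).mp (hmemβ j)
    have hcα := (mem_Ej_iff' hn hx (hC0 j) (α j)).mp (hmemα j)
    have hAmem : x j - Real.sqrt (C j) ∈ Ej n x C j := by
      rw [mem_Ej_iff' hn hx (hC0 j)]
      refine ⟨fun i hi => absurd (Fin.lt_def.mp hi) (by omega),
        fun i hi => le_trans hcα.2.2.1 (le_trans (hαβ j) (hcβ.2.1 i hi)),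
        le_refl _,
        le_trans hcα.2.2.1 (le_trans (hαβ j) hcβ.2.2.2)⟩
    have hAle : α j ≤ x j - Real.sqrt (C j) := by
      rw [hE j] at hAmem; exact hAmem.1
    exact le_antisymm hAle hcα.2.2.1
end

section
/- The set 𝔾 is nonempty; in fact, there exists ε > 0 such that the constant vector C = (ε, …, ε) belongs to 𝔾, and for this C one has F_j(C) = (4/3)ε^{3/2} for every j. -/
open MeasureTheory Set
open scoped Classical

/-- `𝔾` is nonempty: there is `ε > 0` such that the constant vector
`C = (ε, …, ε)` lies in `𝔾`, and for it `F_j(C) = (4/3) ε^{3/2}` for all `j`. -/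
theorem stmt_10 (n : ℕ) (hn : 1 ≤ n) (x : Fin n → ℝ) (hx : StrictMono x) :
    ∃ ε : ℝ, 0 < ε ∧ (fun _ : Fin n => ε) ∈ Gset n x ∧
      ∀ j : Fin n, Fj n x (fun _ => ε) j = (4 / 3) * ε ^ ((3 : ℝ) / 2) := by
  have hne : Nonempty (Fin n) := ⟨⟨0, hn⟩⟩
  -- choose r > 0 with 2r < |x i - x j| for all i ≠ j
  obtain ⟨r, hr, hsep⟩ : ∃ r : ℝ, 0 < r ∧ ∀ i j : Fin n, i < j → 2 * r < x j - x i := by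
    classical
    set s : Finset ℝ := (Finset.univ.filter (fun p : Fin n × Fin n => p.1 < p.2)).image
      (fun p => x p.2 - x p.1) with hs
    by_cases hsn : s.Nonempty
    · refine ⟨s.min' hsn / 4, ?_, ?_⟩
      · have : 0 < s.min' hsn := by
          obtain ⟨a, ha, hav⟩ := Finset.mem_image.1 (s.min'_mem hsn)
          have : a.1 < a.2 := (Finset.mem_filter.1 ha).2
          have := hx this
          linarith [hav ▸ sub_pos.2 this]
        linarith
      · intro i j hij
        have hmem : x j - x i ∈ s := Finset.mem_image.2
          ⟨(i, j), Finset.mem_filter.2 ⟨Finset.mem_univ _, hij⟩, rfl⟩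
        have h1 := s.min'_le _ hmem
        have : 0 < s.min' hsn := by
          obtain ⟨a, ha, hav⟩ := Finset.mem_image.1 (s.min'_mem hsn)
          have : a.1 < a.2 := (Finset.mem_filter.1 ha).2
          have := hx this
          linarith [hav ▸ sub_pos.2 this]
        linarith
    · refine ⟨1, one_pos, fun i j hij => absurd ?_ hsn⟩
      exact ⟨x j - x i, Finset.mem_image.2 ⟨(i, j), Finset.mem_filter.2 ⟨Finset.mem_univ _, hij⟩, rfl⟩⟩
  set ε := r ^ 2 with hε
  have hεpos : 0 < ε := pow_pos hr 2
  set C : Fin n → ℝ := fun _ => ε with hC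
  -- separation in abs form
  have hsep' : ∀ i j : Fin n, i ≠ j → 2 * r < |x i - x j| := by
    intro i j hij
    rcases lt_or_gt_of_ne hij with h | h
    · rw [abs_sub_comm, abs_of_pos (sub_pos.2 (hx h))]; exact hsep i j h
    · rw [abs_of_pos (sub_pos.2 (hx h))]; exact hsep j i h
  -- on the interval, fmax = fj j
  have key : ∀ j : Fin n, ∀ t ∈ Icc (x j - r) (x j + r), fmax n x C t = fj n x C j t := by
    intro j t ht
    obtain ⟨ht1, ht2⟩ := ht
    have h0 : 0 ≤ fj n x C j t := by
      simp only [fj, hC, hε]; nlinarith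
    have hle : ∀ i : Fin n, fj n x C i t ≤ fj n x C j t := by
      intro i
      by_cases hij : i = j
      · subst hij; exact le_refl _
      · have habs := hsep' i j hij
        simp only [fj, hC]
        have : (t - x j) ^ 2 ≤ (t - x i) ^ 2 := by
          rcases lt_or_gt_of_ne hij with h | h
          · have := hsep i j h; nlinarith
          · have := hsep j i h; nlinarith
        linarith
    have hsup : (⨆ i : Fin n, fj n x C i t) = fj n x C j t :=
      le_antisymm (ciSup_le hle) (le_ciSup (f := fun i : Fin n => fj n x C i t) (Set.Finite.bddAbove (Set.finite_range _)) j)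
    simp only [fmax, hsup, max_eq_left h0]
  -- Ej is the interval
  have hEj : ∀ j : Fin n, Ej n x C j = Icc (x j - r) (x j + r) := by
    intro j
    ext t
    simp only [Ej, mem_setOf_eq, mem_Icc]
    constructor
    · intro h
      have h0 : 0 ≤ fmax n x C t := le_max_right _ _
      rw [← h] at h0
      simp only [fj, hC, hε] at h0
      constructor <;> nlinarith
    · intro ht
      exact (key j t ht).symm
  -- the integral value
  have hval : ∀ j : Fin n, Fj n x C j = (4 / 3) * r ^ 3 := by
    intro j
    have hne' : (Ej n x C j).Nonempty := by
      rw [hEj j]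
      exact ⟨x j, by constructor <;> linarith⟩
    have hdef : Fj n x C j = ∫ t in Ej n x C j, fmax n x C t := if_pos hne'
    rw [hdef, hEj j]
    have hcongr : ∫ t in Icc (x j - r) (x j + r), fmax n x C t
        = ∫ t in Icc (x j - r) (x j + r), (ε - (t - x j) ^ 2) := by
      apply setIntegral_congr_fun measurableSet_Icc
      intro t ht
      rw [key j t ht]; rfl
    rw [hcongr, MeasureTheory.integral_Icc_eq_integral_Ioc,
      ← intervalIntegral.integral_of_le (by linarith : x j - r ≤ x j + r)]
    have hint : ∫ t in (x j - r)..(x j + r), (ε - (t - x j) ^ 2)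
        = ∫ s in (x j - r - x j)..(x j + r - x j), (ε - s ^ 2) := by
      have h := intervalIntegral.integral_comp_sub_right (a := x j - r) (b := x j + r)
        (fun s => ε - s ^ 2) (x j)
      simpa using h
    rw [hint]
    have e1 : x j - r - x j = -r := by ring
    have e2 : x j + r - x j = r := by ring
    rw [e1, e2]
    have hi1 : IntervalIntegrable (fun _ : ℝ => ε) volume (-r) r :=
      intervalIntegrable_const
    have hi2 : IntervalIntegrable (fun s : ℝ => s ^ 2) volume (-r) r :=
      (continuous_pow 2).intervalIntegrable _ _
    rw [intervalIntegral.integral_sub hi1 hi2, intervalIntegral.integral_const,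
      integral_pow]
    simp only [hε, smul_eq_mul]
    ring
  have hrpow : ε ^ ((3 : ℝ) / 2) = r ^ 3 := by
    rw [hε, ← Real.rpow_natCast r 2, ← Real.rpow_mul hr.le, ← Real.rpow_natCast r 3]
    norm_num
  refine ⟨ε, hεpos, fun j => ?_, fun j => ?_⟩
  · rw [show (fun _ : Fin n => ε) = C from rfl, hval j]
    positivity
  · rw [show (fun _ : Fin n => ε) = C from rfl, hval j, hrpow]
end
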